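/- arXiv:1007.4901 — 5 statements merged into one kernel-verified Lean document; each statement's English description precedes it below -/
import Mathlib

section
/- For every t > 0 and every z ∈ ℂ with Im z > 0, the matrix (𝔄(z)ᴴ · J · 𝔄(z) − J)/(z − z̄) is Hermitian positive semidefinite, where 𝔄(z)ᴴ denotes the conjugate transpose of 𝔄(z) and z̄ the complex conjugate of z (so z − z̄ = 2i·Im z). -/
open Matrix
open scoped ComplexOrder

/-- The matrix `A₁(z)` of formula (6.1), written in terms of a square root `w` of `z`. -/
noncomputable def matA1 (t : ℝ) (w : ℂ) : Matrix (Fin 2) (Fin 2) ℂ :=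
  !![Complex.cos (t * w), Complex.sin (t * w) / w;
     -w * Complex.sin (t * w), Complex.cos (t * w)]

/-- The matrix `A₂(z)` of formula (6.1). -/
noncomputable def matA2 (z : ℂ) : Matrix (Fin 2) (Fin 2) ℂ :=
  !![Complex.cos z, Complex.sin z;
     -Complex.sin z, Complex.cos z]

/-- The matrix `J = [[0, −1], [1, 0]]`. -/
noncomputable def matJ : Matrix (Fin 2) (Fin 2) ℂ :=
  !![0, -1; 1, 0]

/-!
Put `ω(v) = Im (v₀ v̄₁)`, so that `v* J v = 2i ω(v)` and the quadratic form of
`(𝔄ᴴ J 𝔄 − J)/(z − z̄)` at `x` is `(ω(𝔄 x) − ω(x)) / Im z`; it suffices that both factors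
increase `ω`. This is a Lagrange identity: `t ↦ A₁` and `s ↦ A₂(s z)` are fundamental matrices
of canonical systems `p' = a q`, `q' = −b p`, with `(a, b) = (1, z)` and `(z, z)` respectively,
and along any solution `d/ds Im (p q̄) = Im a |q|² + Im b |p|² ≥ 0`.
-/

open ComplexConjugate

def jForm (v : Fin 2 → ℂ) : ℝ := (v 0 * conj (v 1)).im

theorem monotone_jForm_of_hasDerivAt {a b : ℂ} (ha : 0 ≤ a.im) (hb : 0 ≤ b.im)
    {p q : ℝ → ℂ} (hp : ∀ s, HasDerivAt p (a * q s) s) (hq : ∀ s, HasDerivAt q (-(b * p s)) s) :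
    Monotone fun s => jForm ![p s, q s] := by
  refine monotone_of_hasDerivAt_nonneg (fun s => ?_) fun s =>
    add_nonneg (mul_nonneg ha (Complex.normSq_nonneg (q s)))
      (mul_nonneg hb (Complex.normSq_nonneg (p s)))
  have h : HasDerivAt (fun s => jForm ![p s, q s]) _ s :=
    Complex.imCLM.hasFDerivAt.comp_hasDerivAt s ((hp s).mul (hq s).star)
  refine h.congr_deriv ?_
  simp only [RCLike.star_def, star_neg, star_mul', mul_neg, Complex.imCLM_apply, Complex.add_im,
    Complex.mul_im, Complex.mul_re, Complex.conj_im, Complex.conj_re, Complex.neg_im,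
    Complex.normSq_apply]
  ring

theorem matJ_conjTranspose : matJᴴ = -matJ := by
  ext i j; fin_cases i <;> fin_cases j <;> simp [matJ]

theorem star_dotProduct_matJ_mulVec (v : Fin 2 → ℂ) :
    star v ⬝ᵥ (matJ *ᵥ v) = 2 * Complex.I * jForm v := by
  have h := Complex.sub_conj (v 0 * conj (v 1))
  simp only [map_mul, Complex.conj_conj] at h
  simp only [Complex.ofReal_mul, Complex.ofReal_ofNat, dotProduct, Pi.star_apply,
    RCLike.star_def, mulVec, matJ, of_apply, cons_val', cons_val_fin_one, Fin.sum_univ_two,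
    cons_val_zero, cons_val_one, zero_mul, neg_mul, one_mul, zero_add, mul_neg, add_zero,
    jForm] at h ⊢
  linear_combination h

theorem isHermitian_smul_conjTranspose_mul_matJ_mul_sub (M : Matrix (Fin 2) (Fin 2) ℂ) (z : ℂ) :
    ((z - conj z)⁻¹ • (Mᴴ * matJ * M - matJ)).IsHermitian := by
  rw [IsHermitian, conjTranspose_smul, conjTranspose_sub, conjTranspose_mul, conjTranspose_mul,
    conjTranspose_conjTranspose, matJ_conjTranspose, star_inv₀, star_sub, Complex.star_def,
    Complex.conj_conj, ← neg_sub z, inv_neg, neg_smul, ← smul_neg]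
  congr 1
  noncomm_ring

theorem star_dotProduct_smul_conjTranspose_mul_matJ_mul_sub_mulVec
    (M : Matrix (Fin 2) (Fin 2) ℂ) {z : ℂ} (hz : z.im ≠ 0) (x : Fin 2 → ℂ) :
    star x ⬝ᵥ (((z - conj z)⁻¹ • (Mᴴ * matJ * M - matJ)) *ᵥ x)
      = (((jForm (M *ᵥ x) - jForm x) / z.im : ℝ) : ℂ) := by
  have hz' : (z.im : ℂ) ≠ 0 := by exact_mod_cast hz
  rw [smul_mulVec, dotProduct_smul, sub_mulVec, dotProduct_sub, ← mulVec_mulVec,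
    ← mulVec_mulVec, dotProduct_mulVec, ← star_mulVec, star_dotProduct_matJ_mulVec,
    star_dotProduct_matJ_mulVec, Complex.sub_conj, smul_eq_mul]
  push_cast
  field_simp

theorem posSemidef_smul_conjTranspose_mul_matJ_mul_sub {M : Matrix (Fin 2) (Fin 2) ℂ} {z : ℂ}
    (hz : 0 < z.im) (hM : ∀ x, jForm x ≤ jForm (M *ᵥ x)) :
    PosSemidef ((z - conj z)⁻¹ • (Mᴴ * matJ * M - matJ)) := by
  refine .of_dotProduct_mulVec_nonneg (isHermitian_smul_conjTranspose_mul_matJ_mul_sub M z)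
    fun x => ?_
  rw [star_dotProduct_smul_conjTranspose_mul_matJ_mul_sub_mulVec M hz.ne', Complex.zero_le_real]
  exact div_nonneg (sub_nonneg.2 (hM x)) hz.le

theorem matA1_zero (w : ℂ) : matA1 0 w = 1 := by
  ext i j; fin_cases i <;> fin_cases j <;> simp [matA1]

theorem matA2_zero : matA2 0 = 1 := by
  ext i j; fin_cases i <;> fin_cases j <;> simp [matA2]

theorem jForm_le_jForm_matA1_mulVec {t : ℝ} (ht : 0 ≤ t) {w : ℂ} (hw₀ : w ≠ 0)
    (hw : 0 ≤ (w ^ 2).im) (x : Fin 2 → ℂ) : jForm x ≤ jForm (matA1 t w *ᵥ x) := by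
  let P : ℂ → ℂ := fun s => Complex.cos (s * w) * x 0 + Complex.sin (s * w) / w * x 1
  let Q : ℂ → ℂ := fun s => -w * Complex.sin (s * w) * x 0 + Complex.cos (s * w) * x 1
  have hP : ∀ s, HasDerivAt P (1 * Q s) s := fun s => by
    have h : HasDerivAt P _ s := ((hasDerivAt_mul_const w).ccos.mul_const (x 0)).add
      (((hasDerivAt_mul_const w).csin.div_const w).mul_const (x 1))
    refine h.congr_deriv ?_
    simp only [Q]
    field_simp
  have hQ : ∀ s, HasDerivAt Q (-(w ^ 2 * P s)) s := fun s => by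
    have h : HasDerivAt Q _ s :=
      (((hasDerivAt_mul_const w).csin.const_mul (-w)).mul_const (x 0)).add
        ((hasDerivAt_mul_const w).ccos.mul_const (x 1))
    refine h.congr_deriv ?_
    simp only [P]
    field_simp
    ring
  have hvec : ∀ s : ℝ, ![P s, Q s] = matA1 s w *ᵥ x := fun s => by
    ext i; fin_cases i <;> simp [P, Q, matA1, mulVec, dotProduct, Fin.sum_univ_two]
  simpa only [hvec, matA1_zero, one_mulVec] using monotone_jForm_of_hasDerivAt (by simp) hw
    (fun s => (hP s).comp_ofReal) (fun s => (hQ s).comp_ofReal) ht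

theorem jForm_le_jForm_matA2_mulVec {z : ℂ} (hz : 0 ≤ z.im) (x : Fin 2 → ℂ) :
    jForm x ≤ jForm (matA2 z *ᵥ x) := by
  let P : ℂ → ℂ := fun s => Complex.cos (s * z) * x 0 + Complex.sin (s * z) * x 1
  let Q : ℂ → ℂ := fun s => -Complex.sin (s * z) * x 0 + Complex.cos (s * z) * x 1
  have hP : ∀ s, HasDerivAt P (z * Q s) s := fun s => by
    have h : HasDerivAt P _ s := ((hasDerivAt_mul_const z).ccos.mul_const (x 0)).add
      ((hasDerivAt_mul_const z).csin.mul_const (x 1))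
    exact h.congr_deriv (by ring)
  have hQ : ∀ s, HasDerivAt Q (-(z * P s)) s := fun s => by
    have h : HasDerivAt Q _ s := ((hasDerivAt_mul_const z).csin.neg.mul_const (x 0)).add
      ((hasDerivAt_mul_const z).ccos.mul_const (x 1))
    exact h.congr_deriv (by ring)
  have hvec : ∀ s : ℝ, ![P s, Q s] = matA2 (s * z) *ᵥ x := fun s => by
    ext i; fin_cases i <;> simp [P, Q, matA2, mulVec, dotProduct, Fin.sum_univ_two]
  have h := monotone_jForm_of_hasDerivAt hz hz
    (fun s => (hP s).comp_ofReal) (fun s => (hQ s).comp_ofReal) zero_le_one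
  simp only [hvec] at h
  simpa only [Complex.ofReal_zero, zero_mul, Complex.ofReal_one, one_mul, matA2_zero,
    one_mulVec] using h

/-- For every `t > 0` and `z` in the open upper half-plane, with `w` any square root of `z`,
the matrix `(𝔄(z)ᴴ J 𝔄(z) − J)/(z − z̄)` is positive semidefinite, where `𝔄 = A₁ · A₂`. -/
theorem matA_J_posSemidef (t : ℝ) (ht : 0 < t) (z w : ℂ) (hz : 0 < z.im) (hw : w ^ 2 = z) :
    Matrix.PosSemidef
      ((z - (starRingEnd ℂ) z)⁻¹ •
        ((matA1 t w * matA2 z)ᴴ * matJ * (matA1 t w * matA2 z) - matJ)) := by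
  have hw₀ : w ≠ 0 := by
    rintro rfl
    simp [← hw] at hz
  refine posSemidef_smul_conjTranspose_mul_matJ_mul_sub hz fun x => ?_
  rw [← mulVec_mulVec]
  exact (jForm_le_jForm_matA2_mulVec hz.le x).trans
    (jForm_le_jForm_matA1_mulVec ht.le hw₀ (hw ▸ hz.le) _)
end

section
/- Fix t > 0 and let Δ(z) = cos(t√z)·cos z − ((z+1)/2)·(sin(t√z)/√z)·sin z. If z ∈ ℂ is nonreal (Im z ≠ 0), then Δ(z) does not belong to the real interval [−1, 1]; in particular, all solutions of Δ(z)² = 1 are real. -/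
/-- The discriminant `Δ(z) = cos(t√z)·cos z − ((z+1)/2)·(sin(t√z)/√z)·sin z` of formula (6.4),
with `√z` taken as the principal branch `z^(1/2)`. -/
noncomputable def Delta (t : ℝ) (z : ℂ) : ℂ :=
  Complex.cos (t * z ^ (1 / 2 : ℂ)) * Complex.cos z -
    ((z + 1) / 2) * (Complex.sin (t * z ^ (1 / 2 : ℂ)) / z ^ (1 / 2 : ℂ)) * Complex.sin z

/-! `Δ(z)` is half the trace of the monodromy matrix `M = T_z(1) T_{√z}(t)`, where `T_w(x)` is the
transfer matrix of `u'' = -w² u` over `[0, x]`; `M` has determinant `1`. If `Δ(z) = r ∈ [-1, 1]`,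
then `M` has an eigenvalue `μ` with `|μ| = 1`, hence there is a nonzero solution `u` of
`u'' = -z u` on `[0, t]`, continued by `u'' = -z² u` on `[0, 1]`, whose final Cauchy data are `μ`
times its initial ones. Integrating `(u' ū)'` over both pieces, the boundary terms cancel because
`|μ| = 1`, so `∫|u'|² = z ∫_0^t |u|² + z² ∫_0^1 |u|²`. For `Im z ≠ 0`, the imaginary and real
parts of this identity force all these integrals to vanish, so `u = 0`. -/

open Complex Matrix Set intervalIntegral
open scoped ComplexConjugate

theorem integral_normSq_deriv_sub_mul_integral_normSq {u u' : ℝ → ℂ} {c : ℂ}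
    (hu : ∀ x, HasDerivAt u (u' x) x) (hu' : ∀ x, HasDerivAt u' (-c * u x) x) (a b : ℝ) :
    ((∫ x in a..b, normSq (u' x) : ℝ) : ℂ) - c * ((∫ x in a..b, normSq (u x) : ℝ) : ℂ) =
      u' b * conj (u b) - u' a * conj (u a) := by
  have hcu : Continuous u := continuous_iff_continuousAt.2 fun x => (hu x).continuousAt
  have hcu' : Continuous u' := continuous_iff_continuousAt.2 fun x => (hu' x).continuousAt
  have hF : ∀ x, HasDerivAt (fun y => u' y * conj (u y))
      ((normSq (u' x) : ℂ) - c * normSq (u x)) x := by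
    intro x
    refine ((hu' x).mul (hu x).star).congr_deriv ?_
    change _ * conj (u x) + u' x * conj (u' x) = _
    rw [← mul_conj, ← mul_conj]
    ring
  rw [← integral_eq_sub_of_hasDerivAt (fun x _ => hF x)
      (Continuous.intervalIntegrable (by fun_prop) _ _),
    integral_sub, integral_const_mul, intervalIntegral.integral_ofReal,
    intervalIntegral.integral_ofReal]
  all_goals exact Continuous.intervalIntegrable (by fun_prop) _ _

theorem Continuous.eq_zero_of_integral_eq_zero_of_nonneg {f : ℝ → ℝ} (hc : Continuous f)
    (hf : 0 ≤ f) {a b x : ℝ} (h : ∫ y in a..b, f y = 0) (hx : x ∈ Ioo a b) : f x = 0 := by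
  by_contra hfx
  have hpos : 0 < ∫ y in a..b, f y := by
    rw [integral_pos_iff_support_of_nonneg_ae (.of_forall hf) (hc.intervalIntegrable a b)]
    refine ⟨hx.1.trans hx.2, ?_⟩
    exact ((hc.isOpen_support.inter isOpen_Ioo).measure_pos _ ⟨x, hfx, hx⟩).trans_le
      (MeasureTheory.measure_mono (inter_subset_inter_right _ Ioo_subset_Ioc_self))
  exact hpos.ne' h

theorem exists_norm_eq_one_sq_sub_add_eq_zero {r : ℝ} (hr : r ∈ Icc (-1) 1) :
    ∃ μ : ℂ, ‖μ‖ = 1 ∧ μ ^ 2 - 2 * r * μ + 1 = 0 := by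
  have hw : Real.sqrt (1 - r ^ 2) ^ 2 = 1 - r ^ 2 := Real.sq_sqrt (by nlinarith [hr.1, hr.2])
  refine ⟨r + Real.sqrt (1 - r ^ 2) * I, ?_, ?_⟩
  · rw [norm_def, normSq_add_mul_I, hw]
    simp
  · have hw' : (Real.sqrt (1 - r ^ 2) : ℂ) ^ 2 = 1 - r ^ 2 := by exact_mod_cast hw
    linear_combination (Real.sqrt (1 - r ^ 2) : ℂ) ^ 2 * I_sq - hw'

theorem Matrix.det_sub_smul_one_fin_two {R : Type*} [CommRing R] (M : Matrix (Fin 2) (Fin 2) R)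
    (μ : R) : (M - μ • 1).det = μ ^ 2 - M.trace * μ + M.det := by
  simp [det_fin_two, trace_fin_two]
  ring

theorem eq_zero_of_ofReal_eq_mul_add_sq_mul {z : ℂ} (hz : z.im ≠ 0) {A B P : ℝ} (hB : 0 ≤ B)
    (hP : 0 ≤ P) (h : (P : ℂ) = z * A + z ^ 2 * B) : A = 0 ∧ P = 0 := by
  have him := congrArg im h
  have hre := congrArg re h
  simp only [ofReal_im, sq, add_im, mul_im, mul_zero, ofReal_re, zero_add, mul_re, add_re,
    sub_zero] at him hre
  have hA : A = -2 * z.re * B := mul_left_cancel₀ hz (by linear_combination -him)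
  have hPB : P + (z.re ^ 2 + z.im ^ 2) * B = 0 := by rw [hA] at hre; linear_combination hre
  have hB0 : B = 0 := by nlinarith [sq_pos_of_ne_zero hz, sq_nonneg z.re]
  rw [hB0] at hA hPB
  exact ⟨by linarith, by linarith⟩

/-- `transferMatrix w x` maps the Cauchy data `(u 0, u' 0)` of a solution of `u'' = -w² u` to
`(u x, u' x)`. -/
noncomputable def transferMatrix (w : ℂ) (x : ℝ) : Matrix (Fin 2) (Fin 2) ℂ :=
  !![cos (x * w), sin (x * w) / w; -(w * sin (x * w)), cos (x * w)]

theorem transferMatrix_zero (w : ℂ) : transferMatrix w 0 = 1 := by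
  ext i j
  fin_cases i <;> fin_cases j <;> simp [transferMatrix]

theorem det_transferMatrix {w : ℂ} (hw : w ≠ 0) (x : ℝ) : (transferMatrix w x).det = 1 := by
  rw [transferMatrix, det_fin_two_of]
  field_simp
  linear_combination sin_sq_add_cos_sq (x * w)

theorem transferMatrix_mulVec (w : ℂ) (x : ℝ) (v : Fin 2 → ℂ) :
    transferMatrix w x *ᵥ v = ![cos (x * w) * v 0 + sin (x * w) / w * v 1,
      -(w * sin (x * w)) * v 0 + cos (x * w) * v 1] := by
  ext i
  fin_cases i <;> simp [transferMatrix, mulVec, dotProduct, Fin.sum_univ_two]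

theorem continuous_transferMatrix_mulVec (w : ℂ) (v : Fin 2 → ℂ) (i : Fin 2) :
    Continuous fun x => (transferMatrix w x *ᵥ v) i := by
  fin_cases i <;> simp only [transferMatrix_mulVec] <;> fun_prop

theorem hasDerivAt_transferMatrix_mulVec_zero {w : ℂ} (hw : w ≠ 0) (v : Fin 2 → ℂ) (x : ℝ) :
    HasDerivAt (fun x => (transferMatrix w x *ᵥ v) 0) ((transferMatrix w x *ᵥ v) 1) x := by
  have hx : HasDerivAt (fun x : ℝ => (x : ℂ) * w) w x := by
    simpa using (ofRealCLM.hasDerivAt (x := x)).mul_const w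
  simp only [transferMatrix_mulVec, cons_val_zero, cons_val_one]
  refine (((hasDerivAt_cos _).comp x hx).mul_const (v 0) |>.add
    (((hasDerivAt_sin _).comp x hx).div_const w |>.mul_const (v 1))).congr_deriv ?_
  field_simp

theorem hasDerivAt_transferMatrix_mulVec_one (w : ℂ) (v : Fin 2 → ℂ) (x : ℝ) :
    HasDerivAt (fun x => (transferMatrix w x *ᵥ v) 1) (-w ^ 2 * (transferMatrix w x *ᵥ v) 0) x := by
  have hx : HasDerivAt (fun x : ℝ => (x : ℂ) * w) w x := by
    simpa using (ofRealCLM.hasDerivAt (x := x)).mul_const w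
  simp only [transferMatrix_mulVec, cons_val_zero, cons_val_one]
  refine ((((hasDerivAt_sin _).comp x hx).const_mul w).neg.mul_const (v 0) |>.add
    (((hasDerivAt_cos _).comp x hx).mul_const (v 1))).congr_deriv ?_
  rcases eq_or_ne w 0 with rfl | hw
  · simp
  field_simp
  ring

theorem trace_transferMatrix_mul_transferMatrix {z s : ℂ} (hs : s ^ 2 = z) (hs0 : s ≠ 0) (t : ℝ) :
    (transferMatrix z 1 * transferMatrix s t).trace =
      2 * (cos (t * s) * cos z - (z + 1) / 2 * (sin (t * s) / s) * sin z) := by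
  subst hs
  rw [trace_fin_two, transferMatrix, transferMatrix]
  simp only [mul_apply, Fin.sum_univ_two, of_apply, cons_val', cons_val_zero, cons_val_one,
    empty_val', cons_val_fin_one, ofReal_one, one_mul]
  field_simp
  ring

theorem eq_zero_of_transferMatrix_mulVec_eq_smul {t : ℝ} (ht : 0 < t) {z s μ : ℂ}
    (hz : z.im ≠ 0) (hs : s ^ 2 = z) (hμ : ‖μ‖ = 1) {v : Fin 2 → ℂ}
    (hv : transferMatrix z 1 *ᵥ (transferMatrix s t *ᵥ v) = μ • v) : v = 0 := by
  have hz0 : z ≠ 0 := by rintro rfl; simp at hz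
  have hs0 : s ≠ 0 := by rintro rfl; simp [← hs] at hz
  have E₁ := integral_normSq_deriv_sub_mul_integral_normSq
    (hasDerivAt_transferMatrix_mulVec_zero hs0 v) (hasDerivAt_transferMatrix_mulVec_one s v) 0 t
  set y := transferMatrix s t *ᵥ v
  have E₂ := integral_normSq_deriv_sub_mul_integral_normSq
    (hasDerivAt_transferMatrix_mulVec_zero hz0 y) (hasDerivAt_transferMatrix_mulVec_one z y) 0 1
  simp only [transferMatrix_zero, one_mulVec, hv, Pi.smul_apply, smul_eq_mul, map_mul] at E₁ E₂
  have hμμ : μ * conj μ = 1 := by rw [mul_conj, normSq_eq_norm_sq, hμ]; simp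
  set A := ∫ x in (0 : ℝ)..t, normSq ((transferMatrix s x *ᵥ v) 0)
  set K₁ := ∫ x in (0 : ℝ)..t, normSq ((transferMatrix s x *ᵥ v) 1)
  set B := ∫ x in (0 : ℝ)..1, normSq ((transferMatrix z x *ᵥ y) 0)
  set K₂ := ∫ x in (0 : ℝ)..1, normSq ((transferMatrix z x *ᵥ y) 1)
  have hsum : ((K₁ + K₂ : ℝ) : ℂ) = z * A + z ^ 2 * B := by
    push_cast
    linear_combination E₁ + E₂ + (A : ℂ) * hs + (v 1 * conj (v 0)) * hμμ
  have hK₁ : 0 ≤ K₁ := integral_nonneg ht.le fun _ _ => normSq_nonneg _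
  have hK₂ : 0 ≤ K₂ := integral_nonneg zero_le_one fun _ _ => normSq_nonneg _
  obtain ⟨hA, hK⟩ := eq_zero_of_ofReal_eq_mul_add_sq_mul hz
    (integral_nonneg zero_le_one fun _ _ => normSq_nonneg _) (add_nonneg hK₁ hK₂) hsum
  have hvanish : ∀ i, ∫ x in (0 : ℝ)..t, normSq ((transferMatrix s x *ᵥ v) i) = 0 →
      (transferMatrix s (t / 2) *ᵥ v) i = 0 := fun i h =>
    normSq_eq_zero.1 <| (continuous_normSq.comp (continuous_transferMatrix_mulVec s v i))
      |>.eq_zero_of_integral_eq_zero_of_nonneg (fun _ => normSq_nonneg _) h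
        ⟨half_pos ht, half_lt_self ht⟩
  refine eq_zero_of_mulVec_eq_zero (M := transferMatrix s (t / 2))
    (by simp [det_transferMatrix hs0]) ?_
  ext i
  fin_cases i
  · exact hvanish 0 hA
  · exact hvanish 1 (by linarith)

theorem Delta_ne_ofReal {t : ℝ} (ht : 0 < t) {z : ℂ} (hz : z.im ≠ 0) {r : ℝ}
    (hr : r ∈ Icc (-1) 1) : Delta t z ≠ r := by
  intro hΔ
  have hz0 : z ≠ 0 := by rintro rfl; simp at hz
  have hs : (z ^ (1 / 2 : ℂ)) ^ 2 = z := by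
    simpa only [one_div, Nat.cast_ofNat] using cpow_nat_inv_pow z two_ne_zero
  set s := z ^ (1 / 2 : ℂ)
  have hs0 : s ≠ 0 := fun h => hz0 (by rw [← hs, h, zero_pow two_ne_zero])
  set M := transferMatrix z 1 * transferMatrix s t
  have htr : M.trace = 2 * Delta t z := trace_transferMatrix_mul_transferMatrix hs hs0 t
  have hdet : M.det = 1 := by
    rw [det_mul, det_transferMatrix hz0, det_transferMatrix hs0, one_mul]
  obtain ⟨μ, hμ, hμr⟩ := exists_norm_eq_one_sq_sub_add_eq_zero hr
  have hchar : (M - μ • 1).det = 0 := by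
    rw [det_sub_smul_one_fin_two, htr, hdet, hΔ]
    linear_combination hμr
  obtain ⟨v, hv0, hv⟩ := exists_mulVec_eq_zero_iff.2 hchar
  rw [sub_mulVec, smul_mulVec, one_mulVec, sub_eq_zero, ← mulVec_mulVec] at hv
  exact hv0 (eq_zero_of_transferMatrix_mulVec_eq_smul ht hz hs hμ hv)

/-- For `t > 0`: if `z` is nonreal then `Δ(z)` is not in the real interval `[−1, 1]`;
in particular, all solutions of `Δ(z)² = 1` are real. -/
theorem Delta_nonreal_not_mem_Icc (t : ℝ) (ht : 0 < t) :
    (∀ z : ℂ, z.im ≠ 0 → ∀ r : ℝ, r ∈ Set.Icc (-1 : ℝ) 1 → Delta t z ≠ (r : ℂ)) ∧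
    (∀ z : ℂ, (Delta t z) ^ 2 = 1 → z.im = 0) := by
  refine ⟨fun z hz r hr => Delta_ne_ofReal ht hz hr, fun z h => ?_⟩
  by_contra hz
  rcases sq_eq_one_iff.1 h with h | h
  · exact Delta_ne_ofReal ht hz (r := 1) (by norm_num) (by simp [h])
  · exact Delta_ne_ofReal ht hz (r := -1) (by norm_num) (by simp [h])
end

section
/- Let 0 < μ < 1 and define f(λ) = ((1−μ)/μ)·(μ + λ²)/(1 + λ)² for λ ∈ [0, μ]. Then f is strictly decreasing on [0, μ]: for all 0 ≤ λ₁ < λ₂ ≤ μ one has f(λ₂) < f(λ₁). Moreover f(0) = 1 − μ and f(μ) = (1−μ)/(1+μ); in particular (1−μ)/(1+μ) < 1 − μ. -/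
/-! Clearing denominators, the difference of `(μ + l²)/(1 + l)²` at `a < b` has the sign of
`(μ - a)(1 + b) + (μ - b)(1 + a)`, which is positive for `-1 < a < b ≤ μ`. Comparing the
values at `λ = μ` and `λ = 0` gives the final inequality. -/

theorem add_sq_mul_one_add_sq_sub (μ a b : ℝ) :
    (μ + a ^ 2) * (1 + b) ^ 2 - (μ + b ^ 2) * (1 + a) ^ 2 =
      (b - a) * ((μ - a) * (1 + b) + (μ - b) * (1 + a)) := by
  ring

theorem strictAntiOn_add_sq_div_one_add_sq (μ : ℝ) :
    StrictAntiOn (fun l : ℝ => (μ + l ^ 2) / (1 + l) ^ 2) (Set.Ioc (-1) μ) := by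
  rintro a ⟨ha, -⟩ b ⟨hb, hbμ⟩ hab
  have hpos : 0 < (b - a) * ((μ - a) * (1 + b) + (μ - b) * (1 + a)) := by
    have : 0 < (μ - a) * (1 + b) := mul_pos (by linarith) (by linarith)
    have : 0 ≤ (μ - b) * (1 + a) := mul_nonneg (by linarith) (by linarith)
    exact mul_pos (by linarith) (by linarith)
  rw [← add_sq_mul_one_add_sq_sub, sub_pos] at hpos
  exact (div_lt_div_iff₀ (pow_pos (by linarith) 2) (pow_pos (by linarith) 2)).2 hpos

/-- For `0 < μ < 1`, the function `f(λ) = ((1−μ)/μ)·(μ + λ²)/(1 + λ)²` is strictly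
decreasing on `[0, μ]`, with `f(0) = 1 − μ` and `f(μ) = (1−μ)/(1+μ)`;
in particular `(1−μ)/(1+μ) < 1 − μ`. -/
theorem extremal_value_strictly_smaller (μ : ℝ) (h0 : 0 < μ) (h1 : μ < 1) :
    (∀ l₁ l₂ : ℝ, 0 ≤ l₁ → l₁ < l₂ → l₂ ≤ μ →
      ((1 - μ) / μ) * (μ + l₂ ^ 2) / (1 + l₂) ^ 2 <
        ((1 - μ) / μ) * (μ + l₁ ^ 2) / (1 + l₁) ^ 2) ∧
    ((1 - μ) / μ) * (μ + (0 : ℝ) ^ 2) / (1 + (0 : ℝ)) ^ 2 = 1 - μ ∧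
    ((1 - μ) / μ) * (μ + μ ^ 2) / (1 + μ) ^ 2 = (1 - μ) / (1 + μ) ∧
    (1 - μ) / (1 + μ) < 1 - μ := by
  have hanti : ∀ l₁ l₂ : ℝ, 0 ≤ l₁ → l₁ < l₂ → l₂ ≤ μ →
      ((1 - μ) / μ) * (μ + l₂ ^ 2) / (1 + l₂) ^ 2 <
        ((1 - μ) / μ) * (μ + l₁ ^ 2) / (1 + l₁) ^ 2 := by
    intro l₁ l₂ h₁ h₁₂ h₂
    simp only [mul_div_assoc]
    exact mul_lt_mul_of_pos_left
      (strictAntiOn_add_sq_div_one_add_sq μ ⟨by linarith, by linarith⟩ ⟨by linarith, h₂⟩ h₁₂)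
      (div_pos (sub_pos.2 h1) h0)
  have hf0 : ((1 - μ) / μ) * (μ + (0 : ℝ) ^ 2) / (1 + (0 : ℝ)) ^ 2 = 1 - μ := by
    field_simp
    ring
  have hfμ : ((1 - μ) / μ) * (μ + μ ^ 2) / (1 + μ) ^ 2 = (1 - μ) / (1 + μ) := by
    field_simp
  exact ⟨hanti, hf0, hfμ, hfμ.symm.trans_lt ((hanti 0 μ le_rfl h0 le_rfl).trans_eq hf0)⟩
end

section
/- Let p > 1 and 0 < δ < 1/2, and let E_δ = ⋃_{n=1}^∞ ([−n^p − δ, −n^p + δ] ∪ [n^p − δ, n^p + δ]) be the Benedicks set. Then E_δ is not homogeneous: for every η > 0 there exist x ∈ E_δ and r > 0 such that the Lebesgue measure of E_δ ∩ [x − r, x + r] is strictly smaller than η·r. -/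
open MeasureTheory Set

/-- The Benedicks set `E_δ = ⋃_{n≥1} ([−nᵖ − δ, −nᵖ + δ] ∪ [nᵖ − δ, nᵖ + δ])`. -/
noncomputable def benedicksSet (p δ : ℝ) : Set ℝ :=
  ⋃ n : ℕ, (Icc (-((n + 1 : ℝ) ^ p) - δ) (-((n + 1 : ℝ) ^ p) + δ) ∪
    Icc ((n + 1 : ℝ) ^ p - δ) ((n + 1 : ℝ) ^ p + δ))

/-- For `p > 1` and `0 < δ < 1/2`, the Benedicks set is not homogeneous: for every `η > 0`
there are `x ∈ E_δ` and `r > 0` with `|E_δ ∩ [x − r, x + r]| < η·r`. -/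
theorem benedicksSet_not_homogeneous (p δ : ℝ) (hp : 1 < p) (hδ0 : 0 < δ) (hδ : δ < 1 / 2) :
    ∀ η : ℝ, 0 < η → ∃ x ∈ benedicksSet p δ, ∃ r : ℝ, 0 < r ∧
      volume (benedicksSet p δ ∩ Icc (x - r) (x + r)) < ENNReal.ofReal (η * r) := by
  intro η hη
  have hp1 : (0:ℝ) < p - 1 := by linarith
  set C : ℝ := (4*δ + 2*η + 1)/η with hCdef
  have hC0 : 0 ≤ C := by positivity
  set N : ℕ := max 2 ⌈C ^ (1/(p-1))⌉₊ with hNdef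
  have hN2 : 2 ≤ N := le_max_left _ _
  have hN1 : (1:ℝ) ≤ (N:ℝ) + 1 := by
    have := Nat.cast_nonneg (α := ℝ) N; linarith
  have hNpos : (0:ℝ) < (N:ℝ) + 1 := by positivity
  -- (N+1)^(p-1) ≥ C
  have hNC : C ≤ ((N:ℝ) + 1) ^ (p-1) := by
    have h1 : C ^ (1/(p-1)) ≤ (N:ℝ) + 1 := by
      have := Nat.le_ceil (C ^ (1/(p-1)))
      have h2 : ((⌈C ^ (1/(p-1))⌉₊ : ℕ) : ℝ) ≤ (N:ℝ) := by
        exact_mod_cast le_max_right 2 ⌈C ^ (1/(p-1))⌉₊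
      linarith
    calc C = (C ^ (1/(p-1))) ^ (p-1) := by
            rw [← Real.rpow_mul hC0, one_div,
              inv_mul_cancel₀ (ne_of_gt hp1), Real.rpow_one]
      _ ≤ ((N:ℝ) + 1) ^ (p-1) := by
            apply Real.rpow_le_rpow (Real.rpow_nonneg hC0 _) h1 (le_of_lt hp1)
  set r : ℝ := ((N:ℝ) + 1) ^ p - 2 with hrdef
  have h3N : (3:ℝ) ≤ (N:ℝ) + 1 := by
    have : (2:ℝ) ≤ (N:ℝ) := by exact_mod_cast hN2
    linarith
  have hNp3 : (3:ℝ) ≤ ((N:ℝ) + 1) ^ p := by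
    calc (3:ℝ) = (3:ℝ) ^ (1:ℝ) := (Real.rpow_one 3).symm
      _ ≤ ((N:ℝ) + 1) ^ (1:ℝ) := Real.rpow_le_rpow (by norm_num) h3N (by norm_num)
      _ ≤ ((N:ℝ) + 1) ^ p := Real.rpow_le_rpow_of_exponent_le (by linarith) (by linarith)
  have hr0 : 0 < r := by rw [hrdef]; linarith
  refine ⟨1, ?_, r, hr0, ?_⟩
  · refine mem_iUnion.2 ⟨0, Or.inr ?_⟩
    simp only [Nat.cast_zero, zero_add, Real.one_rpow, mem_Icc]
    constructor <;> linarith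
  · -- containment in finite union
    have hsub : benedicksSet p δ ∩ Icc (1 - r) (1 + r) ⊆
        ⋃ n ∈ Finset.range N, (Icc (-((n + 1 : ℝ) ^ p) - δ) (-((n + 1 : ℝ) ^ p) + δ) ∪
          Icc ((n + 1 : ℝ) ^ p - δ) ((n + 1 : ℝ) ^ p + δ)) := by
      rintro x ⟨hx, hx1, hx2⟩
      obtain ⟨n, hn⟩ := mem_iUnion.1 hx
      refine mem_iUnion₂.2 ⟨n, ?_, hn⟩
      rw [Finset.mem_range]
      by_contra h
      push_neg at h
      have hle : ((N:ℝ) + 1) ^ p ≤ ((n:ℝ) + 1) ^ p := by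
        apply Real.rpow_le_rpow (by positivity) _ (by linarith)
        have : (N:ℝ) ≤ (n:ℝ) := by exact_mod_cast h
        linarith
      have hnp : r + 2 ≤ ((n:ℝ) + 1) ^ p := by linarith
      rcases hn with h1 | h1
      · simp only [mem_Icc] at h1
        linarith [h1.2]
      · simp only [mem_Icc] at h1
        linarith [h1.1]
    have hvol : ∀ n : ℕ, volume (Icc (-((n + 1 : ℝ) ^ p) - δ) (-((n + 1 : ℝ) ^ p) + δ) ∪
        Icc ((n + 1 : ℝ) ^ p - δ) ((n + 1 : ℝ) ^ p + δ)) ≤ ENNReal.ofReal (4*δ) := by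
      intro n
      calc volume (Icc (-((n + 1 : ℝ) ^ p) - δ) (-((n + 1 : ℝ) ^ p) + δ) ∪
            Icc ((n + 1 : ℝ) ^ p - δ) ((n + 1 : ℝ) ^ p + δ))
          ≤ volume (Icc (-((n + 1 : ℝ) ^ p) - δ) (-((n + 1 : ℝ) ^ p) + δ)) +
            volume (Icc ((n + 1 : ℝ) ^ p - δ) ((n + 1 : ℝ) ^ p + δ)) := measure_union_le _ _
        _ = ENNReal.ofReal (2*δ) + ENNReal.ofReal (2*δ) := by
            rw [Real.volume_Icc, Real.volume_Icc]; ring_nf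
        _ ≤ ENNReal.ofReal (4*δ) := by
            rw [← ENNReal.ofReal_add (by linarith) (by linarith)]
            apply ENNReal.ofReal_le_ofReal; linarith
    have key : (N:ℝ) * (4*δ) < η * r := by
      have hexp : ((N:ℝ) + 1) ^ p = ((N:ℝ) + 1) * ((N:ℝ) + 1) ^ (p-1) := by
        calc ((N:ℝ) + 1) ^ p = ((N:ℝ) + 1) ^ (1 + (p-1)) := by ring_nf
          _ = ((N:ℝ) + 1) ^ (1:ℝ) * ((N:ℝ) + 1) ^ (p-1) := Real.rpow_add hNpos 1 (p-1)
          _ = ((N:ℝ) + 1) * ((N:ℝ) + 1) ^ (p-1) := by rw [Real.rpow_one]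
      have hCeta : C * η = 4*δ + 2*η + 1 := by
        rw [hCdef]; field_simp
      have h1 : η * (((N:ℝ) + 1) ^ p) ≥ ((N:ℝ) + 1) * (4*δ + 2*η + 1) := by
        rw [hexp, ← hCeta]
        have := mul_le_mul_of_nonneg_left hNC (le_of_lt hNpos)
        nlinarith
      rw [hrdef]
      nlinarith [hNpos, hδ0, hη]
    calc volume (benedicksSet p δ ∩ Icc (1 - r) (1 + r))
        ≤ volume (⋃ n ∈ Finset.range N, (Icc (-((n + 1 : ℝ) ^ p) - δ) (-((n + 1 : ℝ) ^ p) + δ) ∪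
          Icc ((n + 1 : ℝ) ^ p - δ) ((n + 1 : ℝ) ^ p + δ))) := measure_mono hsub
      _ ≤ ∑ n ∈ Finset.range N, volume (Icc (-((n + 1 : ℝ) ^ p) - δ) (-((n + 1 : ℝ) ^ p) + δ) ∪
          Icc ((n + 1 : ℝ) ^ p - δ) ((n + 1 : ℝ) ^ p + δ)) := measure_biUnion_finset_le _ _
      _ ≤ ∑ n ∈ Finset.range N, ENNReal.ofReal (4*δ) :=
          Finset.sum_le_sum (fun n _ => hvol n)
      _ = (N : ENNReal) * ENNReal.ofReal (4*δ) := by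
          rw [Finset.sum_const, Finset.card_range, nsmul_eq_mul]
      _ = ENNReal.ofReal ((N:ℝ) * (4*δ)) := by
          rw [ENNReal.ofReal_mul (Nat.cast_nonneg N), ENNReal.ofReal_natCast]
      _ < ENNReal.ofReal (η * r) := by
          apply (ENNReal.ofReal_lt_ofReal_iff (by positivity)).2 key
end

section
/- Let p > 1, 0 < δ < 1/2 and q > 1. Let E_δ = ⋃_{n=1}^∞ ([−n^p − δ, −n^p + δ] ∪ [n^p − δ, n^p + δ]) be the Benedicks set and let E_{δ,q} = E_δ ∪ ⋃_{n=1}^∞ ([−q^{2n}, −q^{2n−1}] ∪ [q^{2n−1}, q^{2n}]) be the modified Benedicks set. Then E_{δ,q} is not homogeneous: for every η > 0 there exist x ∈ E_{δ,q} and r > 0 such that the Lebesgue measure of E_{δ,q} ∩ [x − r, x + r] is strictly smaller than η·r. -/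
open MeasureTheory Set

/-- The modified Benedicks set
`E_{δ,q} = E_δ ∪ ⋃_{n≥1} ([−q^{2n}, −q^{2n−1}] ∪ [q^{2n−1}, q^{2n}])`. -/
noncomputable def benedicksSetMod (p δ q : ℝ) : Set ℝ :=
  benedicksSet p δ ∪
    ⋃ n : ℕ, (Icc (-(q ^ (2 * n + 2))) (-(q ^ (2 * n + 1))) ∪
      Icc (q ^ (2 * n + 1)) (q ^ (2 * n + 2)))

set_option maxHeartbeats 1000000 in
/-- For `p > 1`, `0 < δ < 1/2` and `q > 1`, the modified Benedicks set is not homogeneous: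
for every `η > 0` there are `x ∈ E_{δ,q}` and `r > 0` with
`|E_{δ,q} ∩ [x − r, x + r]| < η·r`. -/
theorem benedicksSetMod_not_homogeneous (p δ q : ℝ) (hp : 1 < p) (hδ0 : 0 < δ)
    (hδ : δ < 1 / 2) (hq : 1 < q) :
    ∀ η : ℝ, 0 < η → ∃ x ∈ benedicksSetMod p δ q, ∃ r : ℝ, 0 < r ∧
      volume (benedicksSetMod p δ q ∩ Icc (x - r) (x + r)) < ENNReal.ofReal (η * r) := by
  intro η hη
  have hq0 : (0:ℝ) < q := lt_trans one_pos hq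
  have hp0 : (0:ℝ) < p := lt_trans one_pos hp
  set ε : ℝ := (q - 1) / (2 * (q + 1)) with hε_def
  have hε : 0 < ε := by
    apply div_pos <;> linarith
  have hlog : 0 < Real.log (1 + ε) := Real.log_pos (by linarith)
  have hγ : 0 < 1 - 1/p := by
    have : 1/p < 1 := by rw [div_lt_one hp0]; exact hp
    linarith
  -- the base sequence `u m = q^(2m+2)` tends to infinity
  have humono : Filter.Tendsto (fun m : ℕ => 2*m+2) Filter.atTop Filter.atTop := by
    refine Filter.tendsto_atTop_mono (fun m => ?_) Filter.tendsto_id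
    simp only [id]
    omega
  have hu : Filter.Tendsto (fun m : ℕ => q ^ (2*m+2)) Filter.atTop Filter.atTop :=
    (tendsto_pow_atTop_atTop_of_one_lt hq).comp humono
  have hup : Filter.Tendsto (fun m : ℕ => (q ^ (2*m+2)) ^ (1/p : ℝ)) Filter.atTop Filter.atTop :=
    (tendsto_rpow_atTop (by positivity)).comp hu
  have hug : Filter.Tendsto (fun m : ℕ => (q ^ (2*m+2)) ^ (1 - 1/p : ℝ)) Filter.atTop Filter.atTop :=
    (tendsto_rpow_atTop hγ).comp hu
  have E1 := hup.eventually_ge_atTop (p / Real.log (1 + ε))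
  have E2 := hu.eventually_ge_atTop (8 / (q - 1))
  have E3 := hug.eventually_gt_atTop (32 * δ * q ^ (1/p : ℝ) / (η * (q - 1)))
  have E4 := hu.eventually_gt_atTop (32 * δ / (η * (q - 1)))
  obtain ⟨m, ⟨⟨h1, h2⟩, h3, h4⟩⟩ := ((E1.and E2).and (E3.and E4)).exists
  set u : ℝ := q ^ (2*m+2) with hu_def
  have hu1 : (1:ℝ) < u := one_lt_pow₀ hq (by omega)
  have hu0 : (0:ℝ) < u := by linarith
  set d : ℝ := u * (q - 1) / 2 with hd_def
  have hd0 : 0 < d := by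
    rw [hd_def]
    apply div_pos (mul_pos hu0 (by linarith)) (by norm_num)
  have hd4 : (4:ℝ) ≤ d := by
    have h := mul_le_mul_of_nonneg_right h2 (show (0:ℝ) ≤ q - 1 by linarith)
    rw [div_mul_cancel₀ _ (show q - 1 ≠ 0 by linarith)] at h
    rw [hd_def]; linarith
  set c : ℝ := u * (q + 1) / 2 with hc_def
  have hcu : c = u + d := by rw [hc_def, hd_def]; ring
  have hc0 : (0:ℝ) < c := by
    rw [hc_def]
    apply div_pos (mul_pos hu0 (by linarith)) (by norm_num)
  have hc1 : (1:ℝ) ≤ c := by nlinarith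
  set r : ℝ := d / 4 with hr_def
  have hr0 : 0 < r := by rw [hr_def]; linarith
  set t : ℝ := c ^ (1/p : ℝ) with ht_def
  have ht0 : 0 < t := Real.rpow_pos_of_pos hc0 _
  have ht1 : (1:ℝ) ≤ t := by
    calc (1:ℝ) = (1:ℝ) ^ (1/p : ℝ) := (Real.one_rpow _).symm
    _ ≤ c ^ (1/p : ℝ) := Real.rpow_le_rpow zero_le_one hc1 (by positivity)
  set N : ℕ := ⌈t⌉₊ with hN_def
  have hN1 : 1 ≤ N := by
    have := Nat.ceil_pos.mpr ht0; omega
  have htN : t ≤ (N:ℝ) := Nat.le_ceil t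
  have hNt : (N:ℝ) ≤ t + 1 := le_of_lt (Nat.ceil_lt_add_one ht0.le)
  set x : ℝ := (N:ℝ) ^ (p : ℝ) with hx_def
  have htp : t ^ (p:ℝ) = c := by
    rw [ht_def, ← Real.rpow_mul hc0.le, one_div_mul_cancel hp0.ne', Real.rpow_one]
  have hcx : c ≤ x := by
    rw [← htp]; exact Real.rpow_le_rpow ht0.le htN hp0.le
  -- key upper bound on x
  have hx_upper : x ≤ c + d / 2 := by
    have hstep1 : x ≤ (t+1) ^ (p:ℝ) :=
      Real.rpow_le_rpow (Nat.cast_nonneg N) hNt hp0.le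
    have hsplit : (t+1) ^ (p:ℝ) = t ^ (p:ℝ) * (1 + 1/t) ^ (p:ℝ) := by
      rw [← Real.mul_rpow ht0.le (by positivity)]
      congr 1
      field_simp
    have hlog1 : Real.log (1 + 1/t) ≤ 1/t := by
      have := Real.log_le_sub_one_of_pos (x := 1 + 1/t) (by positivity)
      linarith
    have hpt : p / t ≤ Real.log (1 + ε) := by
      have htlb : p / Real.log (1 + ε) ≤ t := by
        calc p / Real.log (1 + ε) ≤ u ^ (1/p : ℝ) := h1
        _ ≤ c ^ (1/p : ℝ) := Real.rpow_le_rpow hu0.le (by rw [hcu]; linarith) (by positivity)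
      rw [div_le_iff₀ ht0]
      have := (div_le_iff₀ hlog).mp htlb
      linarith [mul_comm t (Real.log (1+ε))]
    have hfac : (1 + 1/t) ^ (p:ℝ) ≤ 1 + ε := by
      rw [Real.rpow_def_of_pos (by positivity)]
      calc Real.exp (Real.log (1 + 1/t) * p)
          ≤ Real.exp (Real.log (1 + ε)) := by
            apply Real.exp_le_exp.mpr
            have h' : Real.log (1 + 1/t) * p ≤ (1/t) * p :=
              mul_le_mul_of_nonneg_right hlog1 hp0.le
            calc Real.log (1 + 1/t) * p ≤ (1/t)*p := h'
            _ = p / t := by ring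
            _ ≤ Real.log (1 + ε) := hpt
        _ = 1 + ε := Real.exp_log (by linarith)
    have hcε : c * ε = d / 2 := by
      rw [hc_def, hε_def, hd_def]
      field_simp
    calc x ≤ (t+1) ^ (p:ℝ) := hstep1
    _ = c * (1 + 1/t) ^ (p:ℝ) := by rw [hsplit, htp]
    _ ≤ c * (1 + ε) := mul_le_mul_of_nonneg_left hfac hc0.le
    _ = c + c * ε := by ring
    _ = c + d/2 := by rw [hcε]
  -- window bounds
  have hqu : q ^ (2*m+3) = q * u := by rw [hu_def, pow_succ]; ring
  have hxa : u < x - r := by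
    have : u + d ≤ x := by rw [← hcu]; exact hcx
    rw [hr_def]; linarith
  have hxb : x + r + δ < q * u := by
    have hb : c + d = q * u := by rw [hc_def, hd_def]; ring
    have hδd : δ < d / 8 := by linarith
    rw [hr_def]; linarith
  -- membership of x
  have hxmem : x ∈ benedicksSetMod p δ q := by
    left
    refine mem_iUnion.mpr ⟨N - 1, Or.inr ?_⟩
    have hcast : ((N - 1 : ℕ) : ℝ) + 1 = (N : ℝ) := by
      exact_mod_cast Nat.sub_add_cancel hN1
    rw [hcast]
    exact ⟨by rw [hx_def]; linarith, by rw [hx_def]; linarith⟩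
  refine ⟨x, hxmem, r, hr0, ?_⟩
  set K : ℕ := ⌈(q * u) ^ (1/p : ℝ)⌉₊ with hK_def
  -- the covering claim
  have hsub : benedicksSetMod p δ q ∩ Icc (x - r) (x + r) ⊆
      ⋃ n ∈ Finset.range K, Icc (((n:ℝ) + 1) ^ (p:ℝ) - δ) (((n:ℝ) + 1) ^ (p:ℝ) + δ) := by
    rintro y ⟨hyS, hy1, hy2⟩
    have hyu : u < y := lt_of_lt_of_le hxa hy1
    have hyb : y + δ < q * u := by linarith
    have hy0 : 0 < y := by linarith
    simp only [benedicksSetMod, benedicksSet, Set.mem_union, Set.mem_iUnion] at hyS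
    rcases hyS with ⟨n, hn⟩ | ⟨n, hn⟩
    · rcases hn with hneg | hpos
      · exfalso
        have h1n : (1:ℝ) ≤ ((n:ℝ)+1) ^ (p:ℝ) := by
          calc (1:ℝ) = (1:ℝ) ^ (p:ℝ) := (Real.one_rpow _).symm
          _ ≤ ((n:ℝ)+1) ^ (p:ℝ) :=
            Real.rpow_le_rpow zero_le_one
              (by have := Nat.cast_nonneg (α := ℝ) n; linarith) hp0.le
        have := hneg.2
        linarith
      · have hnb : ((n:ℝ)+1) ^ (p:ℝ) ≤ q * u := by
          have := hpos.1
          linarith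
        have hcastle : ((n:ℝ)+1) ≤ (q*u) ^ (1/p:ℝ) := by
          have h0 : (0:ℝ) ≤ ((n:ℝ)+1) ^ (p:ℝ) := by positivity
          have h' := Real.rpow_le_rpow h0 hnb (by positivity : (0:ℝ) ≤ 1/p)
          rwa [← Real.rpow_mul (by positivity : (0:ℝ) ≤ (n:ℝ)+1),
            mul_one_div_cancel hp0.ne', Real.rpow_one] at h'
        have hnK : n < K := by
          have hle : ((n:ℝ)+1) ≤ (K:ℝ) := le_trans hcastle (Nat.le_ceil _)
          have : (n+1 : ℕ) ≤ K := by exact_mod_cast hle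
          omega
        exact mem_iUnion₂.mpr ⟨n, Finset.mem_range.mpr hnK, hpos⟩
    · exfalso
      rcases hn with hneg | hpos
      · have hpow : (0:ℝ) < q ^ (2*n+1) := by positivity
        have := hneg.2
        linarith
      · rcases le_or_gt n m with hnm | hmn
        · have hle : q ^ (2*n+2) ≤ q ^ (2*m+2) := pow_le_pow_right₀ hq.le (by omega)
          rw [← hu_def] at hle
          linarith [hpos.2]
        · have hle : q ^ (2*m+3) ≤ q ^ (2*n+1) := pow_le_pow_right₀ hq.le (by omega)
          rw [hqu] at hle
          linarith [hpos.1]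
  -- measure estimate
  have hmeas : volume (benedicksSetMod p δ q ∩ Icc (x - r) (x + r)) ≤
      ENNReal.ofReal ((K:ℝ) * (2*δ)) := by
    calc volume (benedicksSetMod p δ q ∩ Icc (x - r) (x + r))
        ≤ volume (⋃ n ∈ Finset.range K,
            Icc (((n:ℝ) + 1) ^ (p:ℝ) - δ) (((n:ℝ) + 1) ^ (p:ℝ) + δ)) :=
          measure_mono hsub
      _ ≤ ∑ n ∈ Finset.range K,
            volume (Icc (((n:ℝ) + 1) ^ (p:ℝ) - δ) (((n:ℝ) + 1) ^ (p:ℝ) + δ)) :=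
          measure_biUnion_finset_le _ _
      _ = ∑ _n ∈ Finset.range K, ENNReal.ofReal (2*δ) := by
          apply Finset.sum_congr rfl
          intro n _
          rw [Real.volume_Icc]
          congr 1
          ring
      _ = (K : ENNReal) * ENNReal.ofReal (2*δ) := by
          rw [Finset.sum_const, Finset.card_range, nsmul_eq_mul]
      _ = ENNReal.ofReal ((K:ℝ) * (2*δ)) := by
          rw [← ENNReal.ofReal_natCast K, ← ENNReal.ofReal_mul (Nat.cast_nonneg K)]
  refine lt_of_le_of_lt hmeas ?_
  rw [ENNReal.ofReal_lt_ofReal_iff (mul_pos hη hr0)]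
  -- final real inequality
  have hKle : (K:ℝ) < (q*u) ^ (1/p:ℝ) + 1 := Nat.ceil_lt_add_one (by positivity)
  have hmul : (q*u) ^ (1/p:ℝ) = q ^ (1/p:ℝ) * u ^ (1/p:ℝ) := Real.mul_rpow hq0.le hu0.le
  have husplit : u ^ (1/p:ℝ) * u ^ (1-1/p:ℝ) = u := by
    rw [← Real.rpow_add hu0]
    norm_num
  have hupos : 0 < u ^ (1/p:ℝ) := Real.rpow_pos_of_pos hu0 _
  have hqpos : 0 < q ^ (1/p:ℝ) := Real.rpow_pos_of_pos hq0 _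
  have hη' : η ≠ 0 := ne_of_gt hη
  have hq1' : q - 1 ≠ 0 := by linarith
  have hC : η*(q-1)/16 * (32 * δ * q ^ (1/p:ℝ) / (η * (q - 1))) = 2*δ*q^(1/p:ℝ) := by
    field_simp
    ring
  have hstep : 2*δ*q^(1/p:ℝ) < η*(q-1)/16 * u ^ (1-1/p:ℝ) := by
    have := mul_lt_mul_of_pos_left h3 (show (0:ℝ) < η*(q-1)/16 by
      apply div_pos _ (by norm_num)
      apply mul_pos hη (by linarith))
    rwa [hC] at this
  have key1 : 2*δ*q^(1/p:ℝ)*u^(1/p:ℝ) < η*(q-1)/16 * u := by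
    have h' := mul_lt_mul_of_pos_right hstep hupos
    have heq : (η*(q-1)/16 * u ^ (1-1/p:ℝ)) * u^(1/p:ℝ) = η*(q-1)/16 * u := by
      rw [mul_assoc, mul_comm (u ^ (1-1/p:ℝ)), husplit]
    linarith
  have key2 : 2*δ < η*(q-1)/16 * u := by
    have := mul_lt_mul_of_pos_left h4 (show (0:ℝ) < η*(q-1)/16 by
      apply div_pos _ (by norm_num)
      apply mul_pos hη (by linarith))
    have hC2 : η*(q-1)/16 * (32 * δ / (η * (q - 1))) = 2*δ := by
      field_simp
      ring
    rw [hC2] at this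
    linarith
  have hKexp : (K:ℝ)*(2*δ) < (q^(1/p:ℝ)*u^(1/p:ℝ) + 1)*(2*δ) := by
    rw [← hmul]
    exact mul_lt_mul_of_pos_right hKle (by linarith)
  have hexpand : (q^(1/p:ℝ)*u^(1/p:ℝ) + 1)*(2*δ) = 2*δ*q^(1/p:ℝ)*u^(1/p:ℝ) + 2*δ := by
    ring
  have hrval : η * r = η*(q-1)/16 * u + η*(q-1)/16 * u := by
    rw [hr_def, hd_def]; ring
  linarith
end
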